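/- Let $a>-1$ and let $\widetilde u$ be the degenerate heat kernel. For every $x\in\mathbb{R}$ and $t>0$, the total mass identity $\int_{-\infty}^{\infty}\widetilde u(x,y,t)\,|y|^a\,dy = 1$ holds. -/

import Mathlib

noncomputable section
open Real

/-- The Bessel-type profile `F(z)` with `ν = (a-1)/2`:
`F(z) = e^{-z/2} ( ∑_k (z/4)^{2k}/(k! Γ(k+ν+1)) + (z/4)|z/4|^{-a} ∑_k (z/4)^{2k}/(k! Γ(k-ν+1)) )`. -/
def Fker (a z : ℝ) : ℝ :=
  Real.exp (-z / 2) *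
    ((∑' k : ℕ, (z / 4) ^ (2 * k) / ((Nat.factorial k : ℝ) * Real.Gamma ((k : ℝ) + (a - 1) / 2 + 1))) +
      z / 4 * |z / 4| ^ (-a) *
        ∑' k : ℕ, (z / 4) ^ (2 * k) / ((Nat.factorial k : ℝ) * Real.Gamma ((k : ℝ) - (a - 1) / 2 + 1)))

/-- The one-dimensional degenerate heat kernel
`ũ(x,y,t) = (4t)^{-(a+1)/2} e^{-(x-y)²/(4t)} F(xy/t)`. -/
def utilde (a x y t : ℝ) : ℝ :=
  (4 * t) ^ (-(a + 1) / 2) * Real.exp (-(x - y) ^ 2 / (4 * t)) * Fker a (x * y / t)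

open MeasureTheory

/-! Since `(x - y)² + 2xy = x² + y²`, the integrand is `(4t)^(-(a+1)/2) e^(-x²/4t) e^(-y²/4t)`
times the two power series of `Fker` in `xy/4t`. Integrating term by term against the Gaussian,
the odd series contributes nothing, while the `k`-th even term produces the moment
`∫ |y|^(2k+a) e^(-y²/4t) dy = (4t)^(k+(a+1)/2) Γ(k+(a+1)/2)`, which cancels the Gamma factor of
its coefficient; what is left is `e^(-x²/4t) ∑ (x²/4t)^k / k! = 1`. Term-by-term integration is
legitimate because the series of `L¹` norms is dominated by `∑ r^k / |Γ(k + s)|`, which converges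
since `k! Γ(s) ≤ Γ(k + s)`. -/

open scoped Nat

lemma factorial_mul_Gamma_le_Gamma_nat_add {s : ℝ} (hs : 1 ≤ s) (m : ℕ) :
    m ! * Gamma s ≤ Gamma (m + s) := by
  induction m with
  | zero => simp
  | succ m ih =>
    have hpos : 0 < (m : ℝ) + s := by positivity
    rw [Nat.factorial_succ, Nat.cast_mul, mul_assoc, Nat.cast_succ, add_right_comm,
      Gamma_add_one hpos.ne']
    have := Gamma_pos_of_pos hpos
    calc ((m : ℝ) + 1) * (m ! * Gamma s) ≤ (m + 1) * Gamma (m + s) := by gcongr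
      _ ≤ (m + s) * Gamma (m + s) := by gcongr

lemma summable_pow_div_abs_Gamma_nat_add {r : ℝ} (hr : 0 ≤ r) (s : ℝ) :
    Summable fun k : ℕ => r ^ k / |Gamma (k + s)| := by
  obtain ⟨K, hK⟩ := exists_nat_ge (1 - s)
  have hΓK : 0 < Gamma (K + s) := Gamma_pos_of_pos (by linarith)
  rw [← summable_nat_add_iff K]
  refine ((summable_pow_div_factorial r).mul_left (r ^ K / Gamma (K + s))).of_nonneg_of_le
    (fun _ => by positivity) fun m => ?_
  have hle : m ! * Gamma (K + s) ≤ Gamma ((m + K : ℕ) + s) := by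
    simpa [add_assoc] using factorial_mul_Gamma_le_Gamma_nat_add (s := K + s) (by linarith) m
  rw [abs_of_pos (hle.trans_lt' (by positivity)), pow_add]
  calc r ^ m * r ^ K / Gamma ((m + K : ℕ) + s) ≤ r ^ m * r ^ K / (m ! * Gamma (K + s)) := by
        gcongr
    _ = r ^ K / Gamma (K + s) * (r ^ m / m !) := by field_simp

lemma summable_pow_two_mul_div_factorial_mul_Gamma (z s : ℝ) :
    Summable fun k : ℕ => z ^ (2 * k) / (k ! * Gamma (k + s)) := by
  refine .of_norm_bounded (summable_pow_div_abs_Gamma_nat_add (sq_nonneg z) s) fun k => ?_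
  rw [norm_div, norm_mul, pow_mul, norm_pow, Real.norm_of_nonneg (sq_nonneg z), Real.norm_natCast,
    Real.norm_eq_abs, mul_comm, ← div_div]
  exact div_le_self (by positivity) (mod_cast k.factorial_pos)

lemma hasSum_pow_div_factorial_exp (x : ℝ) : HasSum (fun n : ℕ => x ^ n / n !) (exp x) :=
  Real.exp_eq_exp_ℝ ▸ NormedSpace.expSeries_div_hasSum_exp x

section GaussianMoments

variable {b : ℝ}

lemma integral_abs_rpow_mul_exp_neg_sq_div (hb : 0 < b) {p : ℝ} (hp : -1 < p) :
    ∫ y : ℝ, |y| ^ p * exp (-y ^ 2 / b) = b ^ ((p + 1) / 2) * Gamma ((p + 1) / 2) := by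
  have h := integral_rpow_mul_exp_neg_mul_rpow two_pos hp (inv_pos.mpr hb)
  simp only [rpow_two] at h
  calc ∫ y : ℝ, |y| ^ p * exp (-y ^ 2 / b)
      = ∫ y : ℝ, (fun u => u ^ p * exp (-b⁻¹ * u ^ 2)) |y| := by
        simp only [sq_abs, div_eq_inv_mul, mul_neg, neg_mul]
    _ = b ^ ((p + 1) / 2) * Gamma ((p + 1) / 2) := by
        rw [integral_comp_abs (f := fun u => u ^ p * exp (-b⁻¹ * u ^ 2)), h, inv_rpow hb.le,
          ← rpow_neg hb.le, neg_div, neg_neg]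
        ring

lemma integrable_abs_rpow_mul_exp_neg_sq_div (hb : 0 < b) {p : ℝ} (hp : -1 < p) :
    Integrable fun y : ℝ => |y| ^ p * exp (-y ^ 2 / b) := by
  refine .of_integral_ne_zero ?_
  rw [integral_abs_rpow_mul_exp_neg_sq_div hb hp]
  have : 0 < Gamma ((p + 1) / 2) := Gamma_pos_of_pos (by linarith)
  positivity

lemma integrable_pow_mul_exp_neg_sq_div (hb : 0 < b) (n : ℕ) :
    Integrable fun y : ℝ => y ^ n * exp (-y ^ 2 / b) := by
  have hn : -1 < (n : ℝ) := by linarith [n.cast_nonneg (α := ℝ)]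
  refine (integrable_abs_rpow_mul_exp_neg_sq_div hb hn).mono' (by fun_prop)
    (.of_forall fun y => ?_)
  rw [norm_mul, norm_pow, Real.norm_eq_abs, rpow_natCast, Real.norm_of_nonneg (exp_pos _).le]

lemma integral_odd_pow_mul_exp_neg_sq_div (k : ℕ) :
    ∫ y : ℝ, y ^ (2 * k + 1) * exp (-y ^ 2 / b) = 0 := by
  have h := integral_neg_eq_self (fun y : ℝ => y ^ (2 * k + 1) * exp (-y ^ 2 / b)) volume
  simp only [(odd_two_mul_add_one k).neg_pow, neg_sq, neg_mul, integral_neg] at h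
  linarith

end GaussianMoments

def kernelEvenCoeff (a c : ℝ) (k : ℕ) : ℝ :=
  c ^ (2 * k) / (k ! * Gamma (k + (a - 1) / 2 + 1))

def kernelOddCoeff (a c : ℝ) (k : ℕ) : ℝ :=
  c * |c| ^ (-a) * c ^ (2 * k) / (k ! * Gamma (k - (a - 1) / 2 + 1))

def kernelTerm (a b c : ℝ) (k : ℕ) (y : ℝ) : ℝ :=
  kernelEvenCoeff a c k * (|y| ^ (2 * k + a) * exp (-y ^ 2 / b))
    + kernelOddCoeff a c k * (y ^ (2 * k + 1) * exp (-y ^ 2 / b))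

section KernelTerm

variable {a b : ℝ} (c : ℝ)

lemma kernelEvenCoeff_mul_moment (hb : 0 < b) (ha : -1 < a) (k : ℕ) :
    kernelEvenCoeff a c k * (b ^ ((2 * k + a + 1) / 2) * Gamma ((2 * k + a + 1) / 2))
      = b ^ ((a + 1) / 2) * ((c ^ 2 * b) ^ k / k !) := by
  have hΓ : Gamma (k + (a + 1) / 2) ≠ 0 :=
    (Gamma_pos_of_pos (by linarith [k.cast_nonneg (α := ℝ)])).ne'
  rw [kernelEvenCoeff, show (2 * k + a + 1) / 2 = (k : ℝ) + (a + 1) / 2 by ring,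
    show (k : ℝ) + (a - 1) / 2 + 1 = k + (a + 1) / 2 by ring, rpow_add hb, rpow_natCast,
    mul_pow, ← pow_mul]
  generalize Gamma (k + (a + 1) / 2) = g at hΓ ⊢
  field_simp

lemma abs_kernelOddCoeff_mul_moment (hb : 0 < b) (k : ℕ) :
    |kernelOddCoeff a c k| * (b ^ ((2 * k + 1 + 1 : ℝ) / 2) * Gamma ((2 * k + 1 + 1 : ℝ) / 2))
      = |c * |c| ^ (-a)| * b * ((c ^ 2 * b) ^ k / |Gamma (k - (a - 1) / 2 + 1)|) := by
  rw [kernelOddCoeff, show (2 * k + 1 + 1 : ℝ) / 2 = ((k + 1 : ℕ) : ℝ) by push_cast; ring,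
    rpow_natCast, Nat.cast_succ, Gamma_nat_eq_factorial, abs_div, abs_mul (c * _),
    abs_mul (k ! : ℝ), abs_pow, (even_two_mul k).pow_abs, Nat.abs_cast, pow_succ, mul_pow,
    ← pow_mul]
  generalize |Gamma (k - (a - 1) / 2 + 1)| = g
  rcases eq_or_ne g 0 with rfl | hg
  · simp
  · field_simp

lemma integrable_kernelTerm (hb : 0 < b) (ha : -1 < a) (k : ℕ) :
    Integrable (kernelTerm a b c k) := by
  have hp : -1 < 2 * (k : ℝ) + a := by linarith [k.cast_nonneg (α := ℝ)]
  exact ((integrable_abs_rpow_mul_exp_neg_sq_div hb hp).const_mul _).add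
    ((integrable_pow_mul_exp_neg_sq_div hb _).const_mul _)

lemma integral_kernelTerm (hb : 0 < b) (ha : -1 < a) (k : ℕ) :
    ∫ y, kernelTerm a b c k y = b ^ ((a + 1) / 2) * ((c ^ 2 * b) ^ k / k !) := by
  have hp : -1 < 2 * (k : ℝ) + a := by linarith [k.cast_nonneg (α := ℝ)]
  simp only [kernelTerm]
  rw [integral_add ((integrable_abs_rpow_mul_exp_neg_sq_div hb hp).const_mul _)
      ((integrable_pow_mul_exp_neg_sq_div hb _).const_mul _), integral_const_mul,
    integral_const_mul, integral_abs_rpow_mul_exp_neg_sq_div hb hp,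
    integral_odd_pow_mul_exp_neg_sq_div, mul_zero, add_zero, kernelEvenCoeff_mul_moment c hb ha]

lemma integral_norm_kernelTerm_le (hb : 0 < b) (ha : -1 < a) (k : ℕ) :
    ∫ y, ‖kernelTerm a b c k y‖ ≤ b ^ ((a + 1) / 2) * ((c ^ 2 * b) ^ k / k !)
      + |c * |c| ^ (-a)| * b * ((c ^ 2 * b) ^ k / |Gamma (k - (a - 1) / 2 + 1)|) := by
  have hp₁ : -1 < 2 * (k : ℝ) + a := by linarith [k.cast_nonneg (α := ℝ)]
  have hp₂ : -1 < 2 * (k : ℝ) + 1 := by linarith [k.cast_nonneg (α := ℝ)]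
  have h_even_nonneg : 0 ≤ kernelEvenCoeff a c k := div_nonneg ((even_two_mul k).pow_nonneg c)
    (mul_nonneg k.factorial.cast_nonneg (Gamma_pos_of_pos (by linarith)).le)
  have h_odd_abs (y : ℝ) : |y ^ (2 * k + 1)| = |y| ^ (2 * k + 1 : ℝ) := by
    rw [abs_pow, show (2 * k + 1 : ℝ) = ((2 * k + 1 : ℕ) : ℝ) by push_cast; ring, rpow_natCast]
  calc ∫ y, ‖kernelTerm a b c k y‖
      ≤ ∫ y, (|kernelEvenCoeff a c k| * (|y| ^ (2 * k + a) * exp (-y ^ 2 / b))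
          + |kernelOddCoeff a c k| * (|y| ^ (2 * k + 1 : ℝ) * exp (-y ^ 2 / b))) := by
        refine integral_mono (integrable_kernelTerm c hb ha k).norm
          (((integrable_abs_rpow_mul_exp_neg_sq_div hb hp₁).const_mul _).add
            ((integrable_abs_rpow_mul_exp_neg_sq_div hb hp₂).const_mul _)) fun y => ?_
        refine (norm_add_le _ _).trans (le_of_eq ?_)
        simp only [Real.norm_eq_abs, abs_mul, abs_exp, h_odd_abs,
          abs_of_nonneg (rpow_nonneg (abs_nonneg y) _)]
    _ = |kernelEvenCoeff a c k| * (b ^ ((2 * k + a + 1) / 2) * Gamma ((2 * k + a + 1) / 2))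
          + |kernelOddCoeff a c k|
            * (b ^ ((2 * k + 1 + 1 : ℝ) / 2) * Gamma ((2 * k + 1 + 1 : ℝ) / 2)) := by
        rw [integral_add ((integrable_abs_rpow_mul_exp_neg_sq_div hb hp₁).const_mul _)
            ((integrable_abs_rpow_mul_exp_neg_sq_div hb hp₂).const_mul _),
          integral_const_mul, integral_const_mul, integral_abs_rpow_mul_exp_neg_sq_div hb hp₁,
          integral_abs_rpow_mul_exp_neg_sq_div hb hp₂]
    _ = _ := by rw [abs_of_nonneg h_even_nonneg, kernelEvenCoeff_mul_moment c hb ha,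
          abs_kernelOddCoeff_mul_moment c hb]

lemma summable_integral_norm_kernelTerm (hb : 0 < b) (ha : -1 < a) :
    Summable fun k : ℕ => ∫ y, ‖kernelTerm a b c k y‖ := by
  have h_gamma_arg (k : ℕ) : (k : ℝ) - (a - 1) / 2 + 1 = k + (1 - (a - 1) / 2) := by ring
  refine .of_nonneg_of_le (fun k => integral_nonneg fun y => norm_nonneg _)
    (integral_norm_kernelTerm_le c hb ha) (.add ?_ ?_)
  · exact (summable_pow_div_factorial _).mul_left _
  · simp_rw [h_gamma_arg]
    exact (summable_pow_div_abs_Gamma_nat_add (by positivity) _).mul_left _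

lemma integral_tsum_kernelTerm (hb : 0 < b) (ha : -1 < a) :
    ∫ y, ∑' k, kernelTerm a b c k y = b ^ ((a + 1) / 2) * exp (c ^ 2 * b) := by
  rw [← integral_tsum_of_summable_integral_norm (integrable_kernelTerm c hb ha)
    (summable_integral_norm_kernelTerm c hb ha)]
  simp_rw [integral_kernelTerm c hb ha]
  exact ((hasSum_pow_div_factorial_exp _).mul_left _).tsum_eq

end KernelTerm

lemma exp_neg_sq_sub_div_mul_exp (x y t : ℝ) (ht : t ≠ 0) :
    exp (-(x - y) ^ 2 / (4 * t)) * exp (-(x * y / t) / 2)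
      = exp (-x ^ 2 / (4 * t)) * exp (-y ^ 2 / (4 * t)) := by
  rw [← exp_add, ← exp_add]
  congr 1
  field_simp
  ring

lemma mul_abs_rpow_neg_mul_abs_rpow (a c : ℝ) {y : ℝ} (hy : y ≠ 0) :
    c * y * |c * y| ^ (-a) * |y| ^ a = c * |c| ^ (-a) * y := by
  have := (rpow_pos_of_pos (abs_pos.mpr hy) a).ne'
  rw [abs_mul, mul_rpow (abs_nonneg c) (abs_nonneg y), rpow_neg (abs_nonneg y)]
  field_simp

lemma kernelTerm_eq_of_ne_zero (a b c : ℝ) (k : ℕ) {y : ℝ} (hy : y ≠ 0) :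
    kernelTerm a b c k y
      = (c * y) ^ (2 * k) / (k ! * Gamma (k + (a - 1) / 2 + 1)) * (|y| ^ a * exp (-y ^ 2 / b))
        + (c * y) ^ (2 * k) / (k ! * Gamma (k - (a - 1) / 2 + 1))
          * (c * |c| ^ (-a) * y * exp (-y ^ 2 / b)) := by
  have h_even : |y| ^ (2 * k + a) = y ^ (2 * k) * |y| ^ a := by
    rw [rpow_add (abs_pos.mpr hy), show (2 * k : ℝ) = ((2 * k : ℕ) : ℝ) by push_cast; ring,
      rpow_natCast, (even_two_mul k).pow_abs]
  rw [kernelTerm, kernelEvenCoeff, kernelOddCoeff, h_even]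
  ring

lemma utilde_mul_abs_rpow_eq_tsum (a x : ℝ) {t y : ℝ} (ht : t ≠ 0) (hy : y ≠ 0) :
    utilde a x y t * |y| ^ a
      = (4 * t) ^ (-(a + 1) / 2) * exp (-x ^ 2 / (4 * t))
        * ∑' k, kernelTerm a (4 * t) (x / (4 * t)) k y := by
  set c := x / (4 * t)
  have hs₁ : Summable fun k : ℕ => (c * y) ^ (2 * k) / (k ! * Gamma (k + (a - 1) / 2 + 1)) := by
    simpa only [add_assoc] using
      summable_pow_two_mul_div_factorial_mul_Gamma (c * y) ((a - 1) / 2 + 1)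
  have hs₂ : Summable fun k : ℕ => (c * y) ^ (2 * k) / (k ! * Gamma (k - (a - 1) / 2 + 1)) := by
    simpa only [sub_add_eq_add_sub, add_sub_assoc] using
      summable_pow_two_mul_div_factorial_mul_Gamma (c * y) (1 - (a - 1) / 2)
  have hz : x * y / t / 4 = c * y := by ring
  rw [tsum_congr fun k => kernelTerm_eq_of_ne_zero a (4 * t) c k hy,
    (hs₁.mul_right _).tsum_add (hs₂.mul_right _), tsum_mul_right, tsum_mul_right, utilde, Fker,
    hz]
  set S₁ := ∑' k : ℕ, (c * y) ^ (2 * k) / (k ! * Gamma (k + (a - 1) / 2 + 1))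
  set S₂ := ∑' k : ℕ, (c * y) ^ (2 * k) / (k ! * Gamma (k - (a - 1) / 2 + 1))
  linear_combination
    (4 * t) ^ (-(a + 1) / 2) * (S₁ * |y| ^ a + S₂ * (c * y * |c * y| ^ (-a) * |y| ^ a))
      * exp_neg_sq_sub_div_mul_exp x y t ht
    + (4 * t) ^ (-(a + 1) / 2) * S₂ * exp (-x ^ 2 / (4 * t)) * exp (-y ^ 2 / (4 * t))
      * mul_abs_rpow_neg_mul_abs_rpow a c hy

/-- Total mass identity: for `a > -1`, `x ∈ ℝ` and `t > 0`,
`∫_ℝ ũ(x,y,t) |y|^a dy = 1`. -/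
theorem utilde_total_mass (a : ℝ) (ha : -1 < a) (x t : ℝ) (ht : 0 < t) :
    ∫ y : ℝ, utilde a x y t * |y| ^ a = 1 := by
  have hb : 0 < 4 * t := by positivity
  have h_exponent : (x / (4 * t)) ^ 2 * (4 * t) = x ^ 2 / (4 * t) := by field_simp
  have h_expand : (fun y => utilde a x y t * |y| ^ a) =ᵐ[volume] fun y =>
      (4 * t) ^ (-(a + 1) / 2) * exp (-x ^ 2 / (4 * t))
        * ∑' k, kernelTerm a (4 * t) (x / (4 * t)) k y :=
    (volume.ae_ne 0).mono fun y hy => utilde_mul_abs_rpow_eq_tsum a x ht.ne' hy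
  rw [integral_congr_ae h_expand, integral_const_mul, integral_tsum_kernelTerm _ hb ha, h_exponent,
    neg_div, rpow_neg hb.le]
  field_simp
  rw [← exp_add]
  simp
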